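/- Fix a two-element set N = {1, 2} and a > 0. Define the rule Ψ on interval inventory situations by swapping the interval SOC-rule allocations: Ψ_1 = Γ_2 and Ψ_2 = Γ_1, where Γ_j is the interval with endpoints 2a·m̲_j²/√(Σ_{i∈N} m̲_i²) and 2a·m̅_j²/√(Σ_{i∈N} m̅_i²). Then Ψ is an interval allocation rule satisfying Transfer-Based Additivity, but Ψ fails Inactive Agent Exemption: there exists a situation with m_j = [0,0] for some j but Ψ_j ≠ [0,0]. -/

import Mathlib

/-- An interval inventory situation on `N`: each agent `i ∈ N` has an interval
`[ml i, mu i]` of nonnegative reals. -/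
def IsIntervalSituation (N : Finset (Fin 2)) (ml mu : Fin 2 → ℝ) : Prop :=
  ∀ i ∈ N, 0 ≤ ml i ∧ ml i ≤ mu i

/-- A rule is an interval allocation rule if on every situation the allocations sum,
endpointwise, to the total interval cost `2a·√(∑_{i∈N} mᵢ²)`. -/
def IsIntervalAllocationRule (N : Finset (Fin 2)) (a : ℝ)
    (Ψ : (Fin 2 → ℝ) → (Fin 2 → ℝ) → Fin 2 → ℝ × ℝ) : Prop :=
  ∀ ml mu : Fin 2 → ℝ, IsIntervalSituation N ml mu →
    (∑ j ∈ N, (Ψ ml mu j).1 = 2 * a * Real.sqrt (∑ i ∈ N, (ml i) ^ 2)) ∧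
    (∑ j ∈ N, (Ψ ml mu j).2 = 2 * a * Real.sqrt (∑ i ∈ N, (mu i) ^ 2))

/-- Inactive Agent Exemption: an agent with interval `[0,0]` is allocated `[0,0]`. -/
def SatisfiesIAE (N : Finset (Fin 2))
    (Ψ : (Fin 2 → ℝ) → (Fin 2 → ℝ) → Fin 2 → ℝ × ℝ) : Prop :=
  ∀ ml mu : Fin 2 → ℝ, IsIntervalSituation N ml mu →
    ∀ j ∈ N, ml j = 0 → mu j = 0 → Ψ ml mu j = (0, 0)

/-- Transfer-Based Additivity, stated endpointwise. -/
def SatisfiesTBA (N : Finset (Fin 2))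
    (Ψ : (Fin 2 → ℝ) → (Fin 2 → ℝ) → Fin 2 → ℝ × ℝ) : Prop :=
  ∀ ml mu nl nu : Fin 2 → ℝ, IsIntervalSituation N ml mu → IsIntervalSituation N nl nu →
    ∀ j ∈ N,
      (Real.sqrt (∑ i ∈ N, ((ml i) ^ 2 + (nl i) ^ 2)) *
          (Ψ (fun i => Real.sqrt ((ml i) ^ 2 + (nl i) ^ 2))
             (fun i => Real.sqrt ((mu i) ^ 2 + (nu i) ^ 2)) j).1
        = Real.sqrt (∑ i ∈ N, (ml i) ^ 2) * (Ψ ml mu j).1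
          + Real.sqrt (∑ i ∈ N, (nl i) ^ 2) * (Ψ nl nu j).1) ∧
      (Real.sqrt (∑ i ∈ N, ((mu i) ^ 2 + (nu i) ^ 2)) *
          (Ψ (fun i => Real.sqrt ((ml i) ^ 2 + (nl i) ^ 2))
             (fun i => Real.sqrt ((mu i) ^ 2 + (nu i) ^ 2)) j).2
        = Real.sqrt (∑ i ∈ N, (mu i) ^ 2) * (Ψ ml mu j).2
          + Real.sqrt (∑ i ∈ N, (nu i) ^ 2) * (Ψ nl nu j).2)

/-- The interval SOC-rule on the two-agent player set. -/
noncomputable def intervalSOC (a : ℝ) (ml mu : Fin 2 → ℝ) (j : Fin 2) : ℝ × ℝ :=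
  (2 * a * (ml j) ^ 2 / Real.sqrt (∑ i : Fin 2, (ml i) ^ 2),
   2 * a * (mu j) ^ 2 / Real.sqrt (∑ i : Fin 2, (mu i) ^ 2))

/-- The swapped SOC-rule: agent `1` gets `Γ₂` and agent `2` gets `Γ₁` (in `Fin 2`,
agent `j` gets the SOC-allocation of the other agent `j + 1`). -/
noncomputable def swappedSOC (a : ℝ) (ml mu : Fin 2 → ℝ) (j : Fin 2) : ℝ × ℝ :=
  intervalSOC a ml mu (j + 1)


private lemma key_cancel (a x S : ℝ) (hx : 0 ≤ x) (hxS : x ≤ S) :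
    Real.sqrt S * (2 * a * x / Real.sqrt S) = 2 * a * x := by
  by_cases hS : S = 0
  · have hx0 : x = 0 := le_antisymm (hxS.trans_eq hS) hx
    simp [hx0]
  · have hS' : Real.sqrt S ≠ 0 := by
      rw [Real.sqrt_ne_zero']
      exact lt_of_le_of_ne (hx.trans hxS) (Ne.symm hS)
    rw [mul_comm, div_mul_cancel₀ _ hS']

private lemma sq_le_sum (f : Fin 2 → ℝ) (j : Fin 2) :
    (f j) ^ 2 ≤ ∑ i : Fin 2, (f i) ^ 2 :=
  Finset.single_le_sum (fun i _ => sq_nonneg (f i)) (Finset.mem_univ j)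

/-- On the two-element player set `N = {1, 2}`, the rule obtained from the interval
SOC-rule by swapping the two agents' allocations is an interval allocation rule
satisfying Transfer-Based Additivity, but it fails Inactive Agent Exemption: there is
a situation in which some agent has interval `[0,0]` yet is allocated a nonzero
interval. -/
theorem swapped_soc_TBA_not_IAE (a : ℝ) (ha : 0 < a) :
    IsIntervalAllocationRule (Finset.univ : Finset (Fin 2)) a (swappedSOC a) ∧
    SatisfiesTBA (Finset.univ : Finset (Fin 2)) (swappedSOC a) ∧
    ¬ SatisfiesIAE (Finset.univ : Finset (Fin 2)) (swappedSOC a) := by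
  refine ⟨?_, ?_, ?_⟩
  · intro ml mu _
    constructor
    · rw [Fin.sum_univ_two]
      simp only [swappedSOC, intervalSOC]
      have h01 : (0 : Fin 2) + 1 = 1 := rfl
      rw [h01, show ((1:Fin 2)+1) = 0 from rfl, ← add_div]
      have : 2 * a * ml 1 ^ 2 + 2 * a * ml 0 ^ 2 = 2 * a * (∑ i : Fin 2, (ml i)^2) := by
        rw [Fin.sum_univ_two]; ring
      rw [this, mul_div_assoc, Real.div_sqrt]
    · rw [Fin.sum_univ_two]
      simp only [swappedSOC, intervalSOC]
      have h01 : (0 : Fin 2) + 1 = 1 := rfl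
      rw [h01, show ((1:Fin 2)+1) = 0 from rfl, ← add_div]
      have : 2 * a * mu 1 ^ 2 + 2 * a * mu 0 ^ 2 = 2 * a * (∑ i : Fin 2, (mu i)^2) := by
        rw [Fin.sum_univ_two]; ring
      rw [this, mul_div_assoc, Real.div_sqrt]
  · intro ml mu nl nu _ _ j _
    have hsq : ∀ (f g : Fin 2 → ℝ) (i : Fin 2),
        (Real.sqrt ((f i)^2 + (g i)^2))^2 = (f i)^2 + (g i)^2 := fun f g i =>
      Real.sq_sqrt (by positivity)
    constructor
    · show Real.sqrt (∑ i : Fin 2, ((ml i)^2 + (nl i)^2)) *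
        (2 * a * (Real.sqrt ((ml (j+1))^2 + (nl (j+1))^2))^2 /
          Real.sqrt (∑ i : Fin 2, (Real.sqrt ((ml i)^2 + (nl i)^2))^2)) = _
      have hsum : (∑ i : Fin 2, (Real.sqrt ((ml i)^2 + (nl i)^2))^2)
          = ∑ i : Fin 2, ((ml i)^2 + (nl i)^2) := by
        apply Finset.sum_congr rfl; intro i _; exact hsq ml nl i
      rw [hsum, hsq ml nl (j+1)]
      rw [key_cancel a _ _ (by positivity)
        (Finset.single_le_sum (f := fun i => (ml i)^2 + (nl i)^2)
          (fun i _ => by positivity) (Finset.mem_univ (j+1)))]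
      show _ = Real.sqrt (∑ i : Fin 2, (ml i)^2) *
          (2 * a * (ml (j+1))^2 / Real.sqrt (∑ i : Fin 2, (ml i)^2)) +
        Real.sqrt (∑ i : Fin 2, (nl i)^2) *
          (2 * a * (nl (j+1))^2 / Real.sqrt (∑ i : Fin 2, (nl i)^2))
      rw [key_cancel a _ _ (sq_nonneg _) (sq_le_sum ml (j+1)),
          key_cancel a _ _ (sq_nonneg _) (sq_le_sum nl (j+1))]
      ring
    · show Real.sqrt (∑ i : Fin 2, ((mu i)^2 + (nu i)^2)) *
        (2 * a * (Real.sqrt ((mu (j+1))^2 + (nu (j+1))^2))^2 /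
          Real.sqrt (∑ i : Fin 2, (Real.sqrt ((mu i)^2 + (nu i)^2))^2)) = _
      have hsum : (∑ i : Fin 2, (Real.sqrt ((mu i)^2 + (nu i)^2))^2)
          = ∑ i : Fin 2, ((mu i)^2 + (nu i)^2) := by
        apply Finset.sum_congr rfl; intro i _; exact hsq mu nu i
      rw [hsum, hsq mu nu (j+1)]
      rw [key_cancel a _ _ (by positivity)
        (Finset.single_le_sum (f := fun i => (mu i)^2 + (nu i)^2)
          (fun i _ => by positivity) (Finset.mem_univ (j+1)))]
      show _ = Real.sqrt (∑ i : Fin 2, (mu i)^2) *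
          (2 * a * (mu (j+1))^2 / Real.sqrt (∑ i : Fin 2, (mu i)^2)) +
        Real.sqrt (∑ i : Fin 2, (nu i)^2) *
          (2 * a * (nu (j+1))^2 / Real.sqrt (∑ i : Fin 2, (nu i)^2))
      rw [key_cancel a _ _ (sq_nonneg _) (sq_le_sum mu (j+1)),
          key_cancel a _ _ (sq_nonneg _) (sq_le_sum nu (j+1))]
      ring
  · intro hIAE
    set m : Fin 2 → ℝ := fun i => if i = 0 then 1 else 0 with hm
    have hsit : IsIntervalSituation Finset.univ m m := by
      intro i _
      constructor
      · by_cases h : i = 0 <;> simp [hm, h]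
      · exact le_refl _
    have h1 := hIAE m m hsit 1 (Finset.mem_univ 1) (by simp [hm]) (by simp [hm])
    have : swappedSOC a m m 1 = (2 * a, 2 * a) := by
      have hsum : (∑ i : Fin 2, (m i)^2) = 1 := by
        rw [Fin.sum_univ_two]; simp [hm]
      unfold swappedSOC intervalSOC
      have h11 : (1 : Fin 2) + 1 = 0 := rfl
      rw [h11, hsum]
      simp [hm]
    rw [this] at h1
    have := congrArg Prod.fst h1
    simp at this
    exact absurd this (by positivity)
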